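/- Let d > 1 be an integer, A a d-collection and i an index with a_i ≥ d. Then span_d(e_i(A)) = span_d(A) if and only if there exists a d-collection B obtained from A by a finite sequence of proper elementary exchanges performed only at indices strictly less than i, such that b_t ≤ 2(d−1) for all t < i and b_i > 2(d−1). -/
import Mathlib


/-- The span of a `d`-collection `A : ℕ →₀ ℕ` (where `A i` is the multiplicity of the
token `d ^ i`): the set of all sums `∑ i, c i * d ^ i` over sub-collections `c ≤ A`. -/
def dspan (d : ℕ) (A : ℕ →₀ ℕ) : Set ℕ :=
  {n : ℕ | ∃ c : ℕ →₀ ℕ, (∀ i, c i ≤ A i) ∧ n = c.sum (fun i m => m * d ^ i)}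

/-- The total sum `∑ i, a_i * d ^ i` of a `d`-collection. -/
def dsum (d : ℕ) (A : ℕ →₀ ℕ) : ℕ := A.sum (fun i m => m * d ^ i)

/-- Elementary exchange at index `i`: replace `d` tokens `d ^ i` by one token `d ^ (i+1)`. -/
noncomputable def exch (d i : ℕ) (A : ℕ →₀ ℕ) : ℕ →₀ ℕ :=
  A - Finsupp.single i d + Finsupp.single (i + 1) 1

section Aux
open Finset

lemma exch_apply (d i : ℕ) (A : ℕ →₀ ℕ) (t : ℕ) :
    exch d i A t = A t - (if i = t then d else 0) + (if i + 1 = t then 1 else 0) := by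
  simp [exch, Finsupp.tsub_apply, Finsupp.single_apply]

lemma sub_add_single (c : ℕ →₀ ℕ) (i k : ℕ) (h : k ≤ c i) :
    (c - Finsupp.single i k) + Finsupp.single i k = c := by
  ext t
  simp only [Finsupp.add_apply, Finsupp.tsub_apply, Finsupp.single_apply]
  split_ifs with h1
  · subst h1; omega
  · omega

lemma sum_add_single (d : ℕ) (c : ℕ →₀ ℕ) (i k : ℕ) :
    (c + Finsupp.single i k).sum (fun t m => m * d ^ t)
      = c.sum (fun t m => m * d ^ t) + k * d ^ i := by
  rw [Finsupp.sum_add_index' (by intro a; simp) (by intro a b1 b2; ring),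
    Finsupp.sum_single_index (by simp)]

lemma dspan_exch_subset (d : ℕ) (hd : 1 < d) (A : ℕ →₀ ℕ) (i : ℕ) (hi : d ≤ A i) :
    dspan d (exch d i A) ⊆ dspan d A := by
  rintro n ⟨c, hc, rfl⟩
  by_cases h : c (i + 1) ≤ A (i + 1)
  · refine ⟨c, fun t => ?_, rfl⟩
    have h1 := hc t
    rw [exch_apply] at h1
    rcases eq_or_ne i t with rfl | g1
    · rw [if_pos rfl, if_neg (show ¬ i + 1 = i by omega)] at h1; omega
    · rcases eq_or_ne (i + 1) t with rfl | g2
      · omega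
      · rw [if_neg g1, if_neg g2] at h1; omega
  · have h1 := hc (i + 1)
    rw [exch_apply, if_neg (show ¬ i = i + 1 by omega), if_pos rfl] at h1
    have he : c (i + 1) = A (i + 1) + 1 := by omega
    set c0 := c - Finsupp.single (i + 1) 1 with hc0
    have hrec : c0 + Finsupp.single (i + 1) 1 = c := sub_add_single c (i + 1) 1 (by omega)
    refine ⟨c0 + Finsupp.single i d, fun t => ?_, ?_⟩
    · have h2 := hc t
      rw [exch_apply] at h2
      simp only [Finsupp.add_apply, Finsupp.tsub_apply, Finsupp.single_apply, hc0]
      rcases eq_or_ne i t with rfl | g1 <;>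
        [skip; rcases eq_or_ne (i + 1) t with rfl | g2] <;>
        split_ifs at h2 ⊢ <;> omega
    · rw [sum_add_single, ← hrec, sum_add_single, pow_succ]
      ring

lemma dspan_subset_exch (d : ℕ) (hd : 1 < d) (A : ℕ →₀ ℕ) (i : ℕ) (hi : 2 * (d - 1) < A i) :
    dspan d A ⊆ dspan d (exch d i A) := by
  rintro n ⟨c, hc, rfl⟩
  by_cases h : c i ≤ A i - d
  · refine ⟨c, fun t => ?_, rfl⟩
    rw [exch_apply]
    have h1 := hc t
    rcases eq_or_ne i t with rfl | g1
    · rw [if_pos rfl, if_neg (show ¬ i + 1 = i by omega)]; omega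
    · rcases eq_or_ne (i + 1) t with rfl | g2
      · rw [if_neg g1, if_pos rfl]; omega
      · rw [if_neg g1, if_neg g2]; omega
  · have hci : d ≤ c i := by have := hc i; omega
    set c0 := c - Finsupp.single i d with hc0
    have hrec : c0 + Finsupp.single i d = c := sub_add_single c i d hci
    refine ⟨c0 + Finsupp.single (i + 1) 1, fun t => ?_, ?_⟩
    · have h2 := hc t
      rw [exch_apply]
      simp only [Finsupp.add_apply, Finsupp.tsub_apply, Finsupp.single_apply, hc0]
      rcases eq_or_ne i t with rfl | g1 <;>
        [skip; rcases eq_or_ne (i + 1) t with rfl | g2] <;>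
        split_ifs at h2 ⊢ <;> omega
    · rw [sum_add_single, ← hrec, sum_add_single, pow_succ]
      ring

lemma dspan_exch_eq (d : ℕ) (hd : 1 < d) (A : ℕ →₀ ℕ) (i : ℕ) (hi : 2 * (d - 1) < A i) :
    dspan d (exch d i A) = dspan d A :=
  le_antisymm (dspan_exch_subset d hd A i (by omega)) (dspan_subset_exch d hd A i hi)

lemma exch_comm (d t i : ℕ) (ht : t < i) (X : ℕ →₀ ℕ) (hX : d ≤ X i) :
    exch d t (exch d i X) = exch d i (exch d t X) := by
  ext j
  rw [exch_apply, exch_apply, exch_apply, exch_apply]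
  rcases eq_or_ne t j with rfl | g1 <;>
    [skip; rcases eq_or_ne i j with rfl | g2] <;>
    split_ifs at * <;> omega

lemma sum_measure_lt (d i t : ℕ) (hd : 1 < d) (ht : t < i) (X : ℕ →₀ ℕ)
    (hbig : 2 * (d - 1) < X t) :
    ∑ s ∈ range i, (exch d t X) s < ∑ s ∈ range i, X s := by
  have htm : t ∈ range i := mem_range.2 ht
  have h1 : ∀ s, (exch d t X) s = (X s - (if t = s then d else 0)) + (if t + 1 = s then 1 else 0) :=
    fun s => exch_apply d t X s
  have e1 : ∑ s ∈ range i, (exch d t X) s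
      = ∑ s ∈ range i, (X s - (if t = s then d else 0)) + ∑ s ∈ range i, (if t + 1 = s then 1 else 0) := by
    rw [← Finset.sum_add_distrib]
    exact Finset.sum_congr rfl fun s _ => h1 s
  have e2 : ∑ s ∈ range i, (X s - (if t = s then d else 0))
      = (X t - d) + ∑ s ∈ (range i).erase t, X s := by
    rw [← Finset.add_sum_erase _ _ htm, if_pos rfl]
    congr 1
    exact Finset.sum_congr rfl fun s hs => by
      rw [if_neg (Ne.symm (Finset.ne_of_mem_erase hs))]
      omega
  have e3 : X t + ∑ s ∈ (range i).erase t, X s = ∑ s ∈ range i, X s :=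
    Finset.add_sum_erase _ _ htm
  have e4 : ∑ s ∈ range i, (if t + 1 = s then 1 else 0) ≤ 1 := by
    rw [Finset.sum_ite_eq]
    split <;> omega
  omega

lemma normalize_below (d : ℕ) (hd : 1 < d) (i : ℕ) :
    ∀ n (X : ℕ →₀ ℕ), (∑ t ∈ range i, X t) ≤ n →
      ∃ B, Relation.ReflTransGen
          (fun X Y : ℕ →₀ ℕ => ∃ t, t < i ∧ 2 * (d - 1) < X t ∧ Y = exch d t X) X B ∧
        ∀ t < i, B t ≤ 2 * (d - 1) := by
  intro n
  induction n with
  | zero =>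
    intro X hX
    refine ⟨X, .refl, fun t ht => ?_⟩
    have : X t ≤ ∑ s ∈ range i, X s :=
      Finset.single_le_sum (fun _ _ => Nat.zero_le _) (mem_range.2 ht)
    omega
  | succ n ih =>
    intro X hX
    by_cases h : ∀ t < i, X t ≤ 2 * (d - 1)
    · exact ⟨X, .refl, h⟩
    · push_neg at h
      obtain ⟨t, ht, hbig⟩ := h
      have hsum : ∑ s ∈ range i, (exch d t X) s ≤ n := by
        have := sum_measure_lt d i t hd ht X hbig
        omega
      obtain ⟨B, hB, h2⟩ := ih (exch d t X) hsum
      exact ⟨B, .head ⟨t, ht, hbig, rfl⟩ hB, h2⟩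

lemma chain_props (d : ℕ) (hd : 1 < d) {i : ℕ} {X B : ℕ →₀ ℕ}
    (h : Relation.ReflTransGen
      (fun X Y : ℕ →₀ ℕ => ∃ t, t < i ∧ 2 * (d - 1) < X t ∧ Y = exch d t X) X B)
    (hX : d ≤ X i) :
    X i ≤ B i ∧ dspan d X = dspan d B ∧ dspan d (exch d i X) = dspan d (exch d i B) := by
  induction h with
  | refl => exact ⟨le_refl _, rfl, rfl⟩
  | @tail Y Z hXY hYZ ih =>
    obtain ⟨hle, hsp1, hsp2⟩ := ih
    obtain ⟨t, ht, hbig, rfl⟩ := hYZ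
    have hYi : d ≤ Y i := le_trans hX hle
    have hZi : Y i ≤ (exch d t Y) i := by
      rw [exch_apply, if_neg (by omega)]
      omega
    have hsY : dspan d (exch d t Y) = dspan d Y := dspan_exch_eq d hd Y t hbig
    have hcomm : exch d i (exch d t Y) = exch d t (exch d i Y) :=
      (exch_comm d t i ht Y hYi).symm
    have hEiYt : 2 * (d - 1) < (exch d i Y) t := by
      rw [exch_apply, if_neg (by omega), if_neg (by omega)]
      omega
    have hsEi : dspan d (exch d i (exch d t Y)) = dspan d (exch d i Y) := by
      rw [hcomm]
      exact dspan_exch_eq d hd (exch d i Y) t hEiYt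
    exact ⟨le_trans hle hZi, hsp1.trans hsY.symm, hsp2.trans hsEi.symm⟩
lemma fsum_eq (d : ℕ) (c : ℕ →₀ ℕ) (N : ℕ) (h : ∀ t, N ≤ t → c t = 0) :
    c.sum (fun i m => m * d ^ i) = ∑ t ∈ range N, c t * d ^ t := by
  apply Finsupp.sum_of_support_subset
  · intro t ht
    simp only [Finsupp.mem_support_iff] at ht
    simp only [mem_range]
    by_contra h'
    exact ht (h t (le_of_not_gt h'))
  · intros; simp

lemma split_lemma (d : ℕ) (hd : 1 < d) :
    ∀ i (C : ℕ →₀ ℕ), (∀ t, t < i → C t ≤ 2 * (d - 1)) →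
      ∃ c : ℕ →₀ ℕ, (∀ t, c t ≤ C t) ∧ (∀ t, i ≤ t → c t = 0) ∧
        (∑ t ∈ range i, c t * d ^ t) < d ^ i ∧
        (∑ t ∈ range i, C t * d ^ t) < (∑ t ∈ range i, c t * d ^ t) + d ^ i := by
  intro i
  induction i with
  | zero =>
    intro C _
    exact ⟨0, fun t => Nat.zero_le _, fun t _ => rfl, by simp, by simp⟩
  | succ i ih =>
    intro C hC
    obtain ⟨c, h1, h2, h3, h4⟩ := ih C (fun t ht => hC t (ht.trans (Nat.lt_succ_self i)))
    set k := min (C i) (d - 1) with hk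
    refine ⟨c + Finsupp.single i k, fun t => ?_, fun t ht => ?_, ?_, ?_⟩
    · simp only [Finsupp.add_apply, Finsupp.single_apply]
      rcases eq_or_ne i t with rfl | g
      · rw [if_pos rfl]
        have := h2 i le_rfl
        omega
      · rw [if_neg g]
        have := h1 t
        omega
    · simp only [Finsupp.add_apply, Finsupp.single_apply, if_neg (show ¬ i = t by omega)]
      have := h2 t (by omega)
      omega
    · have hs : ∑ t ∈ range (i + 1), (c + Finsupp.single i k) t * d ^ t
          = (∑ t ∈ range i, c t * d ^ t) + k * d ^ i := by
        rw [Finset.sum_range_succ]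
        congr 1
        · apply Finset.sum_congr rfl
          intro t ht
          simp only [Finsupp.add_apply, Finsupp.single_apply,
            if_neg (show ¬ i = t by have := mem_range.1 ht; omega)]
          ring
        · simp [Finsupp.add_apply, Finsupp.single_apply, h2 i le_rfl]
      rw [hs]
      have h5 : k * d ^ i ≤ (d - 1) * d ^ i := Nat.mul_le_mul_right _ (min_le_right _ _)
      have h6 : d ^ (i + 1) = (d - 1) * d ^ i + d ^ i := by
        rw [pow_succ]
        have hh : d - 1 + 1 = d := by omega
        calc d ^ i * d = d ^ i * (d - 1 + 1) := by rw [hh]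
          _ = (d - 1) * d ^ i + d ^ i := by ring
      omega
    · have hs : ∑ t ∈ range (i + 1), (c + Finsupp.single i k) t * d ^ t
          = (∑ t ∈ range i, c t * d ^ t) + k * d ^ i := by
        rw [Finset.sum_range_succ]
        congr 1
        · apply Finset.sum_congr rfl
          intro t ht
          simp only [Finsupp.add_apply, Finsupp.single_apply,
            if_neg (show ¬ i = t by have := mem_range.1 ht; omega)]
          ring
        · simp [Finsupp.add_apply, Finsupp.single_apply, h2 i le_rfl]
      rw [hs, Finset.sum_range_succ]
      have hCk : C i ≤ k + (d - 1) := by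
        have := hC i (Nat.lt_succ_self i)
        omega
      have h5 : C i * d ^ i ≤ (k + (d - 1)) * d ^ i := Nat.mul_le_mul_right _ hCk
      have h5' : (k + (d - 1)) * d ^ i = k * d ^ i + (d - 1) * d ^ i := by ring
      have h6 : d ^ (i + 1) = (d - 1) * d ^ i + d ^ i := by
        rw [pow_succ]
        have hh : d - 1 + 1 = d := by omega
        calc d ^ i * d = d ^ i * (d - 1 + 1) := by rw [hh]
          _ = (d - 1) * d ^ i + d ^ i := by ring
      omega

lemma witness_lemma (d : ℕ) (hd : 1 < d) (i : ℕ) (B : ℕ →₀ ℕ)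
    (hb : ∀ t < i, B t ≤ 2 * (d - 1)) (hlo : d ≤ B i) (hhi : B i ≤ 2 * (d - 1)) :
    ¬ dspan d (exch d i B) = dspan d B := by
  obtain ⟨c, h1, h2, h3, h4⟩ := split_lemma d hd i B (fun t ht => hb t ht)
  have h6 : d ^ (i + 1) = (d - 1) * d ^ i + d ^ i := by
    rw [pow_succ]
    have hh : d - 1 + 1 = d := by omega
    calc d ^ i * d = d ^ i * (d - 1 + 1) := by rw [hh]
      _ = (d - 1) * d ^ i + d ^ i := by ring
  have hmem : (∑ t ∈ range i, c t * d ^ t) + (d - 1) * d ^ i ∈ dspan d B := by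
    refine ⟨c + Finsupp.single i (d - 1), fun t => ?_, ?_⟩
    · simp only [Finsupp.add_apply, Finsupp.single_apply]
      rcases eq_or_ne i t with rfl | g
      · rw [if_pos rfl]
        have := h2 i le_rfl
        omega
      · rw [if_neg g]
        have := h1 t
        omega
    · rw [fsum_eq d _ (i + 1) ?_]
      · rw [Finset.sum_range_succ]
        congr 1
        · apply Finset.sum_congr rfl
          intro t ht
          simp only [Finsupp.add_apply, Finsupp.single_apply,
            if_neg (show ¬ i = t by have := mem_range.1 ht; omega)]
          ring
        · simp [Finsupp.add_apply, Finsupp.single_apply, h2 i le_rfl]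
      · intro t ht
        simp only [Finsupp.add_apply, Finsupp.single_apply,
          if_neg (show ¬ i = t by omega), h2 t (by omega)]
        ring
  intro hEq
  rw [← hEq] at hmem
  obtain ⟨c'', hc'', hm⟩ := hmem
  set N := max (i + 1) (c''.support.sup id + 1) with hN
  have hbound : ∀ t, N ≤ t → c'' t = 0 := by
    intro t htN
    by_contra hne
    have hmem' : t ∈ c''.support := Finsupp.mem_support_iff.2 hne
    have := Finset.le_sup (f := id) hmem'
    simp only [id] at this
    omega
  rw [fsum_eq d c'' N hbound] at hm
  have hiN : i + 1 ≤ N := le_max_left _ _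
  have hsplit : (∑ t ∈ Finset.Ico 0 (i + 1), c'' t * d ^ t)
      + (∑ t ∈ Finset.Ico (i + 1) N, c'' t * d ^ t)
      = ∑ t ∈ Finset.Ico 0 N, c'' t * d ^ t :=
    Finset.sum_Ico_consecutive _ (Nat.zero_le _) hiN
  simp only [← Finset.range_eq_Ico] at hsplit
  have hdvd : d ^ (i + 1) ∣ ∑ t ∈ Finset.Ico (i + 1) N, c'' t * d ^ t :=
    Finset.dvd_sum fun t ht => Dvd.dvd.mul_left (pow_dvd_pow d (Finset.mem_Ico.1 ht).1) _
  have htail : ∑ t ∈ Finset.Ico (i + 1) N, c'' t * d ^ t = 0 := by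
    by_contra hne
    have hle := Nat.le_of_dvd (Nat.pos_of_ne_zero hne) hdvd
    omega
  have hrs : ∑ t ∈ range (i + 1), c'' t * d ^ t
      = (∑ t ∈ range i, c'' t * d ^ t) + c'' i * d ^ i := Finset.sum_range_succ _ _
  have hhead : ∀ t ∈ range i, c'' t * d ^ t ≤ B t * d ^ t := by
    intro t ht
    have hct := hc'' t
    rw [exch_apply, if_neg (show ¬ i = t by have := mem_range.1 ht; omega),
      if_neg (show ¬ i + 1 = t by have := mem_range.1 ht; omega)] at hct
    exact Nat.mul_le_mul_right _ (by omega)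
  have hsum_le : ∑ t ∈ range i, c'' t * d ^ t ≤ ∑ t ∈ range i, B t * d ^ t :=
    Finset.sum_le_sum hhead
  have hci : c'' i ≤ B i - d := by
    have := hc'' i
    rw [exch_apply, if_pos rfl, if_neg (show ¬ i + 1 = i by omega)] at this
    omega
  have hcip : c'' i * d ^ i ≤ (d - 2) * d ^ i := Nat.mul_le_mul_right _ (by omega)
  have hd2 : (d - 1) * d ^ i = (d - 2) * d ^ i + d ^ i := by
    have hh : d - 1 = d - 2 + 1 := by omega
    rw [hh, add_mul, one_mul]
  omega


end Aux

open Finset in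
/-- The elementary exchange `e_i` preserves the span iff the `i`-normalization of `A`
(obtained by proper elementary exchanges at indices `< i`, leaving all entries below `i`
at most `2(d-1)`) has its `i`-th entry greater than `2(d-1)`. -/
theorem stmt_16 (d : ℕ) (hd : 1 < d) (A : ℕ →₀ ℕ) (i : ℕ) (hi : d ≤ A i) :
    dspan d (exch d i A) = dspan d A ↔
      ∃ B : ℕ →₀ ℕ,
        Relation.ReflTransGen
          (fun X Y : ℕ →₀ ℕ => ∃ t, t < i ∧ 2 * (d - 1) < X t ∧ Y = exch d t X) A B ∧
        (∀ t < i, B t ≤ 2 * (d - 1)) ∧ 2 * (d - 1) < B i := by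
  constructor
  · intro hspan
    obtain ⟨B, hRT, hsmall⟩ := normalize_below d hd i (∑ t ∈ range i, A t) A le_rfl
    obtain ⟨hle, hsp1, hsp2⟩ := chain_props d hd hRT hi
    refine ⟨B, hRT, hsmall, ?_⟩
    by_contra hbig
    push_neg at hbig
    refine witness_lemma d hd i B hsmall (le_trans hi hle) hbig ?_
    rw [← hsp2, hspan, hsp1]
  · rintro ⟨B, hRT, hsmall, hbig⟩
    obtain ⟨hle, hsp1, hsp2⟩ := chain_props d hd hRT hi
    rw [hsp2, dspan_exch_eq d hd B i hbig, ← hsp1]
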